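/- The supremum over all parameters (γ, λ, ψ) of the sinusoid objective C is at most 2, and if the two groups are disjoint finite sets there exist parameters making C > 0 unless the two groups have equal empirical distributions of the projected coordinate for every direction — in particular, if G₁ and G₂ can be strictly separated by a line, then some choice of (γ, λ, ψ) gives C > 0. -/
import Mathlib

lemma exists_angle (c s : ℝ) (h : c^2 + s^2 = 1) :
    ∃ θ : ℝ, Real.cos θ = c ∧ Real.sin θ = s := by
  have hc1 : -1 ≤ c := by nlinarith [sq_nonneg s]
  have hc2 : c ≤ 1 := by nlinarith [sq_nonneg s]
  rcases le_or_gt 0 s with hs | hs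
  · refine ⟨Real.arccos c, Real.cos_arccos hc1 hc2, ?_⟩
    rw [Real.sin_arccos]
    have hs2 : 1 - c^2 = s^2 := by linarith
    rw [hs2, Real.sqrt_sq hs]
  · refine ⟨-(Real.arccos c), by rw [Real.cos_neg, Real.cos_arccos hc1 hc2], ?_⟩
    rw [Real.sin_neg, Real.sin_arccos]
    have hs2 : 1 - c^2 = s^2 := by linarith
    rw [hs2, Real.sqrt_sq_eq_abs, abs_of_neg hs, neg_neg]

theorem stmt_16 (G₁ G₂ : Finset (ℝ × ℝ)) (h₁ : G₁.Nonempty) (h₂ : G₂.Nonempty)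
    (hdisj : Disjoint G₁ G₂)
    (C : ℝ → ℝ → ℝ → ℝ)
    (hC : ∀ γ lam ψ, C γ lam ψ =
      (∑ p ∈ G₁, Real.sin (2 * Real.pi / lam * (p.1 * Real.sin γ - p.2 * Real.cos γ) + ψ)) /
          (G₁.card : ℝ)
        - (∑ q ∈ G₂, Real.sin (2 * Real.pi / lam * (q.1 * Real.sin γ - q.2 * Real.cos γ) + ψ)) /
          (G₂.card : ℝ)) :
    (∀ γ lam ψ, 0 < lam → C γ lam ψ ≤ 2) ∧
    ((∃ u : ℝ × ℝ, ∃ a b : ℝ, u.1 ^ 2 + u.2 ^ 2 = 1 ∧ a < b ∧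
        (∀ p ∈ G₁, p.1 * u.1 + p.2 * u.2 ≤ a) ∧
        (∀ q ∈ G₂, q.1 * u.1 + q.2 * u.2 ≥ b)) →
      ∃ γ lam ψ, 0 < lam ∧ 0 < C γ lam ψ) := by
  have hN1 : (0:ℝ) < (G₁.card : ℝ) := by exact_mod_cast Finset.card_pos.mpr h₁
  have hN2 : (0:ℝ) < (G₂.card : ℝ) := by exact_mod_cast Finset.card_pos.mpr h₂
  constructor
  · intro γ lam ψ _
    rw [hC]
    have hb1 : (∑ p ∈ G₁, Real.sin (2 * Real.pi / lam * (p.1 * Real.sin γ - p.2 * Real.cos γ) + ψ))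
        ≤ (G₁.card : ℝ) := by
      calc _ ≤ ∑ _p ∈ G₁, (1:ℝ) := Finset.sum_le_sum (fun p _ => Real.sin_le_one _)
        _ = (G₁.card : ℝ) := by simp
    have hb2 : -(G₂.card : ℝ) ≤
        (∑ q ∈ G₂, Real.sin (2 * Real.pi / lam * (q.1 * Real.sin γ - q.2 * Real.cos γ) + ψ)) := by
      calc -(G₂.card : ℝ) = ∑ _q ∈ G₂, (-1:ℝ) := by simp
        _ ≤ _ := Finset.sum_le_sum (fun q _ => Real.neg_one_le_sin _)
    have h1 : (∑ p ∈ G₁, Real.sin (2 * Real.pi / lam * (p.1 * Real.sin γ - p.2 * Real.cos γ) + ψ))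
        / (G₁.card : ℝ) ≤ 1 := by rw [div_le_one hN1]; exact hb1
    have h2 : (-1:ℝ) ≤
        (∑ q ∈ G₂, Real.sin (2 * Real.pi / lam * (q.1 * Real.sin γ - q.2 * Real.cos γ) + ψ))
        / (G₂.card : ℝ) := by
      rw [le_div_iff₀ hN2]; linarith
    linarith
  · rintro ⟨u, a, b, hu, hab, hG1, hG2⟩
    obtain ⟨γ, hγc, hγs⟩ := exists_angle (-u.2) u.1 (by nlinarith)
    set proj : ℝ × ℝ → ℝ := fun p => p.1 * u.1 + p.2 * u.2 with hprojdef
    have hproj_eq : ∀ p : ℝ × ℝ, p.1 * Real.sin γ - p.2 * Real.cos γ = proj p := by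
      intro p; rw [hγc, hγs, hprojdef]; ring
    -- bound M on |proj| over all points
    have hUne : (G₁ ∪ G₂).Nonempty := h₁.mono Finset.subset_union_left
    set T := (G₁ ∪ G₂).image (fun p => |proj p|) with hT
    have hTne : T.Nonempty := hUne.image _
    set M := T.max' hTne with hM
    have hMb : ∀ p ∈ G₁ ∪ G₂, |proj p| ≤ M :=
      fun p hp => Finset.le_max' T _ (Finset.mem_image_of_mem _ hp)
    have hM0 : 0 ≤ M := by
      obtain ⟨p₀, hp₀⟩ := hUne
      exact le_trans (abs_nonneg _) (hMb p₀ hp₀)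
    -- refined separation bounds inside [-M, M]
    set a' := (G₁.image proj).max' (h₁.image _) with ha'
    set b' := (G₂.image proj).min' (h₂.image _) with hb'
    obtain ⟨p₀, hp₀G, hp₀0⟩ := Finset.mem_image.mp ((G₁.image proj).max'_mem (h₁.image _))
    obtain ⟨q₀, hq₀G, hq₀0⟩ := Finset.mem_image.mp ((G₂.image proj).min'_mem (h₂.image _))
    have hp₀ : proj p₀ = a' := by rw [ha']; exact hp₀0
    have hq₀ : proj q₀ = b' := by rw [hb']; exact hq₀0
    have ha'M : |a'| ≤ M := by rw [← hp₀]; exact hMb p₀ (Finset.mem_union_left _ hp₀G)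
    have hb'M : |b'| ≤ M := by rw [← hq₀]; exact hMb q₀ (Finset.mem_union_right _ hq₀G)
    have ha'b' : a' < b' := by
      rw [← hp₀, ← hq₀]
      calc proj p₀ ≤ a := hG1 p₀ hp₀G
        _ < b := hab
        _ ≤ proj q₀ := hG2 q₀ hq₀G
    have ha'le : ∀ p ∈ G₁, proj p ≤ a' :=
      fun p hp => Finset.le_max' (G₁.image proj) _ (Finset.mem_image_of_mem _ hp)
    have hb'le : ∀ q ∈ G₂, b' ≤ proj q :=
      fun q hq => Finset.min'_le (G₂.image proj) _ (Finset.mem_image_of_mem _ hq)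
    -- frequency
    set k := Real.pi / 2 / (M + 1) with hk
    have hk0 : 0 < k := div_pos (by positivity) (by linarith)
    have hkM : k * (M + 1) = Real.pi / 2 := by
      rw [hk]; field_simp
    have hIcc : ∀ t : ℝ, |t| ≤ M → k * t ∈ Set.Icc (-(Real.pi/2)) (Real.pi/2) := by
      intro t ht
      have h1 : |k * t| ≤ Real.pi / 2 := by
        rw [abs_mul, abs_of_pos hk0]
        calc k * |t| ≤ k * (M + 1) := by nlinarith
          _ = Real.pi / 2 := hkM
      constructor
      · linarith [neg_abs_le (k * t)]
      · linarith [le_abs_self (k * t)]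
    have hmono := Real.strictMonoOn_sin
    -- parameters
    refine ⟨γ, 2 * Real.pi / k, Real.pi, div_pos (by positivity) hk0, ?_⟩
    have hlam : 2 * Real.pi / (2 * Real.pi / k) = k := by
      rw [div_div_eq_mul_div, mul_comm, mul_div_assoc, div_self (by positivity), mul_one]
    rw [hC]
    have hterm : ∀ p : ℝ × ℝ,
        Real.sin (2 * Real.pi / (2 * Real.pi / k) * (p.1 * Real.sin γ - p.2 * Real.cos γ) + Real.pi)
          = -Real.sin (k * proj p) := by
      intro p
      rw [hproj_eq, hlam, Real.sin_add]
      simp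
    rw [Finset.sum_congr rfl (fun p _ => hterm p), Finset.sum_congr rfl (fun q _ => hterm q)]
    rw [Finset.sum_neg_distrib, Finset.sum_neg_distrib]
    have hs1 : (∑ p ∈ G₁, Real.sin (k * proj p)) ≤ (G₁.card : ℝ) * Real.sin (k * a') := by
      calc (∑ p ∈ G₁, Real.sin (k * proj p)) ≤ ∑ _p ∈ G₁, Real.sin (k * a') := by
            refine Finset.sum_le_sum (fun p hp => ?_)
            exact hmono.monotoneOn (hIcc _ (hMb p (Finset.mem_union_left _ hp))) (hIcc _ ha'M)
              (by nlinarith [ha'le p hp])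
        _ = (G₁.card : ℝ) * Real.sin (k * a') := by
            rw [Finset.sum_const, nsmul_eq_mul]
    have hs2 : (G₂.card : ℝ) * Real.sin (k * b') ≤ (∑ q ∈ G₂, Real.sin (k * proj q)) := by
      calc (G₂.card : ℝ) * Real.sin (k * b') = ∑ _q ∈ G₂, Real.sin (k * b') := by
            rw [Finset.sum_const, nsmul_eq_mul]
        _ ≤ _ := by
            refine Finset.sum_le_sum (fun q hq => ?_)
            exact hmono.monotoneOn (hIcc _ hb'M) (hIcc _ (hMb q (Finset.mem_union_right _ hq)))
              (by nlinarith [hb'le q hq])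
    have hlt : Real.sin (k * a') < Real.sin (k * b') :=
      hmono (hIcc _ ha'M) (hIcc _ hb'M) (by nlinarith)
    have h1 : (∑ p ∈ G₁, Real.sin (k * proj p)) / (G₁.card : ℝ) ≤ Real.sin (k * a') := by
      rw [div_le_iff₀ hN1]; linarith
    have h2 : Real.sin (k * b') ≤ (∑ q ∈ G₂, Real.sin (k * proj q)) / (G₂.card : ℝ) := by
      rw [le_div_iff₀ hN2]; linarith
    rw [neg_div, neg_div]
    linarith
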